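/- Let C be an Eulerian circuit of a directed Eulerian graph G, and let v be a node occurring (at least) three times in C, at positions giving subwalks C = ... v_0 C_0 v C_1 v_1 ..., where C_0 is the subwalk from an occurrence v_0 of v to the next occurrence, and C_1 from that occurrence to the following occurrence v_1. Then the circuit C* obtained from C by swapping the subwalks C_0 and C_1 is also an Eulerian circuit of G. -/

import Mathlib

/-- The underlying undirected simple graph of a directed graph `E` (no self-loops). -/
def underlyingUG {V : Type*} (E : V → V → Prop) : SimpleGraph V where
  Adj a b := a ≠ b ∧ (E a b ∨ E b a)
  symm := ⟨fun a b h => ⟨h.1.symm, h.2.symm⟩⟩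
  loopless := ⟨fun a h => h.1 rfl⟩

/-- Out-degree of `v`: number of out-neighbors. -/
noncomputable def outdeg {V : Type*} (E : V → V → Prop) (v : V) : ℕ := Set.ncard {w | E v w}

/-- In-degree of `v`: number of in-neighbors. -/
noncomputable def indeg {V : Type*} (E : V → V → Prop) (v : V) : ℕ := Set.ncard {u | E u v}

/-- The cyclic sequence of consecutive pairs of a circuit given as a vertex list. -/
def cyclicPairs {V : Type*} (c : List V) : List (V × V) := c.zip (c.rotate 1)

/-- `c` is an Eulerian circuit: a nonempty closed walk using every edge exactly once. -/
def IsEulerianCircuit {V : Type*} (E : V → V → Prop) (c : List V) : Prop :=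
  c ≠ [] ∧ (cyclicPairs c).Nodup ∧ ∀ p : V × V, p ∈ cyclicPairs c ↔ E p.1 p.2

/-- The walk `q` appears (cyclically, as consecutive edges) in the circuit `c`. -/
def Appears {V : Type*} (q c : List V) : Prop :=
  ∃ k, (q.zip q.tail) <:+: cyclicPairs (c.rotate k)

/-- `v` is a cut node of the connected undirected graph `H`. -/
def IsCutNode {V : Type*} (H : SimpleGraph V) (v : V) : Prop :=
  ¬ (H.induce {u | u ≠ v}).Connected

/-- The underlying undirected graph with node `v` (and incident edges) removed. -/
def delNode {V : Type*} (E : V → V → Prop) (v : V) := (underlyingUG E).induce {u | u ≠ v}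

/-! Being an Eulerian circuit depends only on the multiset of edges `cyclicPairs c`, which is
invariant under rotation. Rotated to start at the occurrence of `v` preceding `C_0`, the circuit
`v C_0 v C_1 v R` has as edges the concatenation of those of the closed walks `v C_0 v`, `v C_1 v`
and `v R v`, and swapping `C_0` and `C_1` only exchanges the first two blocks. -/

section

open List

variable {V : Type*}

lemma length_cyclicPairs (c : List V) : (cyclicPairs c).length = c.length := by
  simp [cyclicPairs]

lemma cyclicPairs_rotate (c : List V) (n : ℕ) :
    cyclicPairs (c.rotate n) = (cyclicPairs c).rotate n := by
  simp only [cyclicPairs, zip]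
  rw [zipWith_rotate_distrib _ _ _ _ (length_rotate c 1).symm, rotate_rotate, rotate_rotate,
    add_comm]

lemma List.IsRotated.cyclicPairs_perm {c c' : List V} (h : c ~r c') :
    cyclicPairs c ~ cyclicPairs c' := by
  obtain ⟨n, rfl⟩ := h
  rw [cyclicPairs_rotate]
  exact (rotate_perm _ n).symm

lemma cyclicPairs_cons_append_cons (v : V) (X Y : List V) :
    cyclicPairs (v :: (X ++ v :: Y)) = cyclicPairs (v :: X) ++ cyclicPairs (v :: Y) := by
  simp only [cyclicPairs, rotate_cons_succ, rotate_zero]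
  rw [show v :: (X ++ v :: Y) = (v :: X) ++ (v :: Y) from rfl,
    show X ++ v :: Y ++ [v] = (X ++ [v]) ++ (Y ++ [v]) by simp, zip_append (by simp)]

lemma IsEulerianCircuit.of_perm {E : V → V → Prop} {c c' : List V}
    (hc : IsEulerianCircuit E c) (hp : cyclicPairs c ~ cyclicPairs c') :
    IsEulerianCircuit E c' := by
  obtain ⟨hne, hnd, hmem⟩ := hc
  refine ⟨?_, hp.nodup_iff.mp hnd, fun p => hp.mem_iff.symm.trans (hmem p)⟩
  rw [← length_pos_iff, ← length_cyclicPairs, ← hp.length_eq, length_cyclicPairs]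
  exact length_pos_iff.mpr hne

lemma cyclicPairs_perm_swap_segments (v : V) (A B D F : List V) :
    cyclicPairs (A ++ [v] ++ B ++ [v] ++ D ++ [v] ++ F) ~
      cyclicPairs (A ++ [v] ++ D ++ [v] ++ B ++ [v] ++ F) := by
  have rotate_to_v : ∀ X Y : List V,
      (A ++ [v] ++ X ++ [v] ++ Y ++ [v] ++ F) ~r v :: (X ++ v :: (Y ++ v :: (F ++ A))) := by
    intro X Y
    simpa using isRotated_append (l := A) (l' := v :: (X ++ v :: (Y ++ v :: F)))
  calc cyclicPairs (A ++ [v] ++ B ++ [v] ++ D ++ [v] ++ F)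
      ~ cyclicPairs (v :: (B ++ v :: (D ++ v :: (F ++ A)))) := (rotate_to_v B D).cyclicPairs_perm
    _ = cyclicPairs (v :: B) ++ (cyclicPairs (v :: D) ++ cyclicPairs (v :: (F ++ A))) := by
        rw [cyclicPairs_cons_append_cons, cyclicPairs_cons_append_cons]
    _ ~ cyclicPairs (v :: D) ++ (cyclicPairs (v :: B) ++ cyclicPairs (v :: (F ++ A))) :=
        perm_append_comm_assoc _ _ _
    _ = cyclicPairs (v :: (D ++ v :: (B ++ v :: (F ++ A)))) := by
        rw [cyclicPairs_cons_append_cons, cyclicPairs_cons_append_cons]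
    _ ~ cyclicPairs (A ++ [v] ++ D ++ [v] ++ B ++ [v] ++ F) :=
        (rotate_to_v D B).symm.cyclicPairs_perm

end

theorem swap_segments_eulerian_general {V : Type*} (E : V → V → Prop)
    (v : V) (A B D F : List V)
    (hc : IsEulerianCircuit E (A ++ [v] ++ B ++ [v] ++ D ++ [v] ++ F)) :
    IsEulerianCircuit E (A ++ [v] ++ D ++ [v] ++ B ++ [v] ++ F) :=
  hc.of_perm (cyclicPairs_perm_swap_segments v A B D F)

/-- Swapping two consecutive `v`-to-`v` segments of an Eulerian circuit yields an
Eulerian circuit: if `A ++ [v] ++ B ++ [v] ++ D ++ [v] ++ F` is Eulerian then so is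
`A ++ [v] ++ D ++ [v] ++ B ++ [v] ++ F`. -/
theorem swap_segments_eulerian {V : Type*} [Fintype V] (E : V → V → Prop)
    (hconn : (underlyingUG E).Connected)
    (v : V) (A B D F : List V)
    (hc : IsEulerianCircuit E (A ++ [v] ++ B ++ [v] ++ D ++ [v] ++ F)) :
    IsEulerianCircuit E (A ++ [v] ++ D ++ [v] ++ B ++ [v] ++ F) :=
  swap_segments_eulerian_general E v A B D F hc
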